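/- arXiv:2206.04261 — 10 statements merged into one kernel-verified Lean document; each statement's English description precedes it below -/
import Mathlib

section
/- Let λ = (λ₁ < λ₂ < ... < λ_t) be an unrefinable partition (a partition into distinct parts such that no part equals the sum of two distinct missing parts, where a missing part is an integer in {1,...,λ_t} not appearing in λ). Then the number m of missing parts of λ satisfies m ≤ ⌊λ_t / 2⌋. -/
/-- The n-th triangular number. -/
def T (n : ℕ) : ℕ := n * (n + 1) / 2

/-- A partition of `N` into distinct parts, represented as a finite set of
positive integers with at least two elements summing to `N`. -/
def DistinctPartition (N : ℕ) (S : Finset ℕ) : Prop :=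
  (∀ x ∈ S, 0 < x) ∧ 2 ≤ S.card ∧ S.sum id = N

/-- The missing parts: integers in `{1, …, λ_t}` not appearing in the partition. -/
def Missing (S : Finset ℕ) : Finset ℕ := Finset.Icc 1 (S.sup id) \ S

/-- No part is the sum of two distinct missing parts. -/
def Unrefinable (S : Finset ℕ) : Prop :=
  ∀ a ∈ Missing S, ∀ b ∈ Missing S, a ≠ b → a + b ∉ S

def UnrefinablePartition (N : ℕ) (S : Finset ℕ) : Prop :=
  DistinctPartition N S ∧ Unrefinable S

/-- A maximal unrefinable partition: its largest part is maximal among the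
largest parts of all unrefinable partitions of `N`. -/
def MaximalUnrefinable (N : ℕ) (S : Finset ℕ) : Prop :=
  UnrefinablePartition N S ∧
    ∀ S' : Finset ℕ, UnrefinablePartition N S' → S'.sup id ≤ S.sup id

/-! The missing parts lie strictly between `0` and the largest part `L`, and since `L` is a part,
unrefinability says that no two distinct missing parts are complementary, `μ + μ' = L`. Hence
`μ ↦ min μ (L - μ)` maps the missing parts injectively into `{1, …, ⌊L / 2⌋}`. -/

theorem card_le_half_of_forall_add_ne {A : Finset ℕ} {L : ℕ} (hA : A ⊆ Finset.Ioo 0 L)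
    (hA_add : ∀ a ∈ A, ∀ b ∈ A, a ≠ b → a + b ≠ L) : A.card ≤ L / 2 := by
  have hA' : ∀ a ∈ A, 0 < a ∧ a < L := fun a ha => Finset.mem_Ioo.mp (hA ha)
  calc A.card ≤ (Finset.Icc 1 (L / 2)).card := by
        refine Finset.card_le_card_of_injOn (fun a => min a (L - a)) ?_ ?_
        · intro a ha
          obtain ⟨ha_pos, ha_lt⟩ := hA' a ha
          simp only [Finset.coe_Icc, Set.mem_Icc]
          omega
        · intro a ha b hb hab
          by_contra hne
          obtain ⟨ha_pos, ha_lt⟩ := hA' a ha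
          obtain ⟨hb_pos, hb_lt⟩ := hA' b hb
          have hab_sum : a + b = L := by simp only at hab; omega
          exact hA_add a ha b hb hne hab_sum
    _ = L / 2 := by simp

theorem sup_id_mem_of_mem_missing {S : Finset ℕ} {μ : ℕ} (hμ : μ ∈ Missing S) :
    S.sup id ∈ S := by
  have hS : S.Nonempty := by
    by_contra hS
    simp [Missing, Finset.not_nonempty_iff_eq_empty.mp hS] at hμ
  obtain ⟨x, hx, hx_sup⟩ := Finset.exists_mem_eq_sup S hS id
  exact hx_sup ▸ hx

theorem missing_subset_Ioo (S : Finset ℕ) : Missing S ⊆ Finset.Ioo 0 (S.sup id) := by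
  intro μ hμ
  obtain ⟨hμ_Icc, hμ_S⟩ := Finset.mem_sdiff.mp hμ
  obtain ⟨hμ_pos, hμ_le⟩ := Finset.mem_Icc.mp hμ_Icc
  have hμ_ne : μ ≠ S.sup id := by rintro rfl; exact hμ_S (sup_id_mem_of_mem_missing hμ)
  exact Finset.mem_Ioo.mpr ⟨hμ_pos, lt_of_le_of_ne hμ_le hμ_ne⟩

theorem Unrefinable.card_missing_le {S : Finset ℕ} (hS : Unrefinable S) :
    (Missing S).card ≤ S.sup id / 2 :=
  card_le_half_of_forall_add_ne (missing_subset_Ioo S) fun a ha b hb hab hsum =>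
    hS a ha b hb hab (hsum ▸ sup_id_mem_of_mem_missing ha)

theorem missing_parts_bound (N : ℕ) (S : Finset ℕ)
    (h : UnrefinablePartition N S) :
    (Missing S).card ≤ S.sup id / 2 :=
  h.2.card_missing_le
end

section
/- Let λ be an unrefinable partition with largest part λ_t, and let μ be a missing part of λ with μ ≠ λ_t/2. Then λ_t − μ is a part of λ. -/
theorem missing_complement_mem (N : ℕ) (S : Finset ℕ)
    (h : UnrefinablePartition N S) (μ : ℕ) (hμ : μ ∈ Missing S)
    (hne : 2 * μ ≠ S.sup id) :
    S.sup id - μ ∈ S := by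
  obtain ⟨⟨hpos, hcard, hsum⟩, hunref⟩ := h
  have hne' : S.Nonempty := Finset.card_pos.mp (by omega)
  obtain ⟨m, hmS, hmsup⟩ := Finset.exists_mem_eq_sup S hne' id
  have htS : S.sup id ∈ S := by rw [hmsup]; exact hmS
  simp only [Missing, Finset.mem_sdiff, Finset.mem_Icc] at hμ
  obtain ⟨⟨h1, h2⟩, hnotin⟩ := hμ
  have hlt : μ < S.sup id := lt_of_le_of_ne h2 (fun e => hnotin (e ▸ htS))
  by_contra hc
  have hmiss : S.sup id - μ ∈ Missing S := by
    simp only [Missing, Finset.mem_sdiff, Finset.mem_Icc]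
    exact ⟨⟨by omega, by omega⟩, hc⟩
  have hμm : μ ∈ Missing S := by
    simp only [Missing, Finset.mem_sdiff, Finset.mem_Icc]
    exact ⟨⟨h1, h2⟩, hnotin⟩
  exact hunref μ hμm _ hmiss (by omega) (by rwa [show μ + (S.sup id - μ) = S.sup id by omega])
end

section
/- Let n ≥ 11, 1 ≤ d ≤ n−1, and let λ = (λ₁ < ... < λ_t) be an unrefinable partition of T_n − d. If d is a part of λ, then λ_t ≤ 2n − 2. -/
lemma gauss_Icc (m : ℕ) : 2 * (∑ x ∈ Finset.Icc 1 m, x) = m * (m + 1) := by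
  induction m with
  | zero => simp
  | succ k ih =>
    rw [Finset.sum_Icc_succ_top (by omega : 1 ≤ k + 1), mul_add, ih]
    ring

lemma two_T (n : ℕ) : 2 * T n = n * (n + 1) := by
  rw [T]
  exact Nat.mul_div_cancel' (Nat.even_mul_succ_self n).two_dvd

theorem bound_d_mem (n d : ℕ) (hn : 11 ≤ n) (hd1 : 1 ≤ d) (hd2 : d ≤ n - 1)
    (S : Finset ℕ) (h : UnrefinablePartition (T n - d) S) (hdS : d ∈ S) :
    S.sup id ≤ 2 * n - 2 := by
  by_contra hL
  push_neg at hL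
  obtain ⟨⟨hpos, hcard, hsum⟩, hunref⟩ := h
  set L := S.sup id with hLdef
  have hL' : 2 * n - 1 ≤ L := by omega
  have hSne : S.Nonempty := Finset.card_pos.mp (by omega)
  obtain ⟨b, hb, hbe⟩ := Finset.exists_mem_eq_sup S hSne id
  have hLS : L ∈ S := by rw [hLdef, hbe]; exact hb
  set I := Finset.Icc 1 (n - 1) with hI
  have key : ∀ x ∈ I, x ∈ S ∨ L - x ∈ S := by
    intro x hx
    rw [hI, Finset.mem_Icc] at hx
    by_contra hc
    push_neg at hc
    have hxM : x ∈ Missing S := by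
      rw [Missing, Finset.mem_sdiff, Finset.mem_Icc]
      exact ⟨⟨hx.1, by omega⟩, hc.1⟩
    have hLxM : L - x ∈ Missing S := by
      rw [Missing, Finset.mem_sdiff, Finset.mem_Icc]
      exact ⟨⟨by omega, by omega⟩, hc.2⟩
    have hne : x ≠ L - x := by omega
    have hxx : x + (L - x) = L := by omega
    have hbad := hunref x hxM (L - x) hLxM hne
    rw [hxx] at hbad
    exact hbad hLS
  set g : ℕ → ℕ := fun x => if x ∈ S then x else L - x with hg
  have hgS : ∀ x ∈ I, g x ∈ S := by
    intro x hx
    rcases key x hx with h1 | h1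
    · simp only [hg, if_pos h1]; exact h1
    · by_cases h2 : x ∈ S
      · simp only [hg, if_pos h2]; exact h2
      · simp only [hg, if_neg h2]; exact h1
  have hgx : ∀ x ∈ I, x ≤ g x := by
    intro x hx
    rw [hI, Finset.mem_Icc] at hx
    by_cases h2 : x ∈ S
    · simp only [hg, if_pos h2]; omega
    · simp only [hg, if_neg h2]; omega
  have hinj : ∀ x ∈ I, ∀ y ∈ I, g x = g y → x = y := by
    intro x hx y hy hxy
    rw [hI, Finset.mem_Icc] at hx hy
    by_cases h2 : x ∈ S <;> by_cases h3 : y ∈ S <;>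
      simp only [hg, if_pos, if_neg, h2, h3, if_true, if_false] at hxy <;> omega
  set G := I.image g with hG
  have hGS : G ⊆ S := by
    intro z hz
    rw [hG, Finset.mem_image] at hz
    obtain ⟨x, hx, rfl⟩ := hz
    exact hgS x hx
  have hLG : L ∉ G := by
    rw [hG, Finset.mem_image]
    rintro ⟨x, hx, hxL⟩
    rw [hI, Finset.mem_Icc] at hx
    by_cases h2 : x ∈ S
    · simp only [hg, if_pos h2] at hxL; omega
    · simp only [hg, if_neg h2] at hxL; omega
  have hsub : insert L G ⊆ S := by
    intro z hz
    rcases Finset.mem_insert.mp hz with rfl | hz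
    · exact hLS
    · exact hGS hz
  have h1 : (insert L G).sum id ≤ S.sum id := Finset.sum_le_sum_of_subset hsub
  have h2 : (insert L G).sum id = L + G.sum id := Finset.sum_insert hLG
  have h3 : G.sum id = I.sum g := by rw [hG]; exact Finset.sum_image hinj
  have h4 : (∑ x ∈ I, x) ≤ I.sum g := Finset.sum_le_sum hgx
  have h5 : 2 * (∑ x ∈ I, x) = (n - 1) * ((n - 1) + 1) := gauss_Icc (n - 1)
  have h6 : 2 * T n = n * (n + 1) := two_T n
  have h7 : n * (n + 1) = (n - 1) * ((n - 1) + 1) + 2 * n := by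
    cases n with
    | zero => omega
    | succ m => simp only [Nat.add_sub_cancel]; ring
  have hsum' : S.sum id = T n - d := hsum
  generalize hk : (n - 1) * ((n - 1) + 1) = k at h5 h7
  omega
end

section
/- Let n ≥ 11, 1 ≤ d ≤ n−1, and let λ = (λ₁ < ... < λ_t) be an unrefinable partition of T_n − d. If d is not a part of λ, then λ_t ≤ 2n − 4. -/
/-!
The missing parts lie in `(0, m)`, where `m` is the largest part, and no two distinct ones sum to
`m` (since `m` is a part). So `x ↦ max x (m - x)` is injective on them, with values in
`[⌈m/2⌉, m)`; replacing the missing part `d` by `m - d` gains a further `m - 2d`. Since the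
missing parts and the parts together fill `{1, …, m}`, the sum `T n - d` of the parts is at least
`m + (m - 2d) + T ((m - 1) / 2)`, which for `m ≥ 2n - 3` exceeds `T n - d`.
-/

open Finset

theorem two_mul_T (k : ℕ) : 2 * T k = k * (k + 1) :=
  Nat.mul_div_cancel' (Nat.even_mul_succ_self k).two_dvd

theorem T_add_two (k : ℕ) : T (k + 2) = T k + (2 * k + 3) := by
  have h₁ := two_mul_T k
  have h₂ := two_mul_T (k + 2)
  have h₃ : (k + 2) * (k + 2 + 1) = k * (k + 1) + 2 * (2 * k + 3) := by ring
  omega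

theorem T_mono : Monotone T := fun _ _ h =>
  Nat.div_le_div_right (Nat.mul_le_mul h (Nat.add_le_add_right h 1))

theorem sum_range_succ_id_eq_T (k : ℕ) : ∑ i ∈ range (k + 1), i = T k := by
  rw [sum_range_id, T, Nat.add_sub_cancel, mul_comm]

theorem sum_missing_add_sum (S : Finset ℕ) :
    ∑ x ∈ Missing S, x + ∑ x ∈ S, x = T (S.sup id) := by
  have hS : S ⊆ range (S.sup id + 1) := fun x hx =>
    mem_range.mpr (Nat.lt_succ_of_le (le_sup (f := id) hx))
  rw [← sum_range_succ_id_eq_T, ← sum_sdiff hS]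
  congr 1
  -- `Missing S` differs from `range (m + 1) \ S` at most by `0`
  refine sum_subset (sdiff_subset_sdiff (fun x hx => ?_) subset_rfl) (fun x hx hxM => ?_)
  · rw [mem_Icc] at hx
    rw [mem_range]
    omega
  · obtain ⟨hx, hxS⟩ := mem_sdiff.mp hx
    rw [Missing, mem_sdiff, mem_Icc] at hxM
    rw [mem_range] at hx
    by_contra hx0
    exact hxM ⟨⟨Nat.one_le_iff_ne_zero.mpr hx0, Nat.le_of_lt_succ hx⟩, hxS⟩

theorem sum_max_sub_le_sum_Ico_of_add_ne {M : Finset ℕ} {m : ℕ} (hM : M ⊆ Ioo 0 m)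
    (hpair : ∀ x ∈ M, ∀ y ∈ M, x ≠ y → x + y ≠ m) :
    ∑ x ∈ M, max x (m - x) ≤ ∑ x ∈ Ico ((m + 1) / 2) m, x := by
  have hinj : Set.InjOn (fun x => max x (m - x)) M := by
    intro x hx y hy hxy
    by_contra hne
    have := hpair x hx y hy hne
    simp only at hxy
    omega
  refine (sum_image (f := fun x => x) hinj).ge.trans (sum_le_sum_of_subset fun z hz => ?_)
  obtain ⟨x, hx, rfl⟩ := mem_image.mp hz
  have := mem_Ioo.mp (hM hx)
  rw [mem_Ico]
  omega

theorem sum_add_sub_le_sum_max {M : Finset ℕ} {d : ℕ} (m : ℕ) (hd : d ∈ M) :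
    ∑ x ∈ M, x + (m - 2 * d) ≤ ∑ x ∈ M, max x (m - x) := by
  rw [← add_sum_erase M _ hd, ← add_sum_erase M (fun x => max x (m - x)) hd]
  have hrest : ∑ x ∈ M.erase d, x ≤ ∑ x ∈ M.erase d, max x (m - x) :=
    sum_le_sum fun x _ => le_max_left x (m - x)
  have hd' : d + (m - 2 * d) ≤ max d (m - d) := by omega
  omega

theorem Unrefinable.sup_add_T_le_sum {S : Finset ℕ} (hS : Unrefinable S) {d : ℕ}
    (hd : d ∈ Missing S) :
    S.sup id + (S.sup id - 2 * d) + T ((S.sup id - 1) / 2) ≤ ∑ x ∈ S, x := by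
  set m := S.sup id
  have hdm : 1 ≤ d ∧ d ≤ m := mem_Icc.mp (mem_sdiff.mp hd).1
  have hne : S.Nonempty := nonempty_iff_ne_empty.mpr fun h => by
    simp only [m, h, sup_empty, bot_eq_zero] at hdm
    omega
  obtain ⟨b, hbS, hb⟩ := exists_mem_eq_sup S hne id
  have hmS : m ∈ S := by
    rw [show m = b from hb]
    exact hbS
  have hM : Missing S ⊆ Ioo 0 m := fun x hx => by
    obtain ⟨hx, hxS⟩ := mem_sdiff.mp hx
    have hxm : x ≠ m := fun h => hxS (h ▸ hmS)
    rw [mem_Icc] at hx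
    rw [mem_Ioo]
    omega
  have hpair : ∀ x ∈ Missing S, ∀ y ∈ Missing S, x ≠ y → x + y ≠ m :=
    fun x hx y hy hxy h => hS x hx y hy hxy (h ▸ hmS)
  have hfill : ∑ x ∈ Missing S, x + ∑ x ∈ S, x = T m := sum_missing_add_sum S
  have hgain := sum_add_sub_le_sum_max m hd
  have hbound := sum_max_sub_le_sum_Ico_of_add_ne hM hpair
  have hsplit := sum_range_add_sum_Ico (fun x => x) (show (m + 1) / 2 ≤ m by omega)
  have hlow : ∑ x ∈ range ((m + 1) / 2), x = T ((m - 1) / 2) := by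
    rw [← sum_range_succ_id_eq_T]
    congr 2
    omega
  have htop : ∑ x ∈ range m, x + m = T m := by
    rw [← sum_range_succ_id_eq_T, sum_range_succ]
  omega

theorem bound_d_not_mem (n d : ℕ) (hn : 11 ≤ n) (hd1 : 1 ≤ d) (hd2 : d ≤ n - 1)
    (S : Finset ℕ) (h : UnrefinablePartition (T n - d) S) (hdS : d ∉ S) :
    S.sup id ≤ 2 * n - 4 := by
  by_contra! hlarge
  have hd : d ∈ Missing S := mem_sdiff.mpr ⟨mem_Icc.mpr ⟨hd1, by omega⟩, hdS⟩
  have hsum : ∑ x ∈ S, x = T n - d := h.1.2.2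
  have hmain := h.2.sup_add_T_le_sum hd
  have hT : T (n - 2) ≤ T ((S.sup id - 1) / 2) := T_mono (by omega)
  have hTn : T n = T (n - 2) + (2 * n - 1) := by
    obtain ⟨k, rfl⟩ : ∃ k, n = k + 2 := ⟨n - 2, by omega⟩
    rw [T_add_two, Nat.add_sub_cancel]
    omega
  omega
end

section
/- Let n ≥ 11 and 1 ≤ d ≤ n−1. If λ is a maximal unrefinable partition of T_n − d with largest part 2n − 2, then d = 1, and the unique such partition is (1, 2, ..., n−2, 2n−2). -/
/-- Folding map: pairs `x` with `2n-2-x`, fixing `2n-2`. -/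
def phiAux (n x : ℕ) : ℕ := if x = 2 * n - 2 then x else min x (2 * n - 2 - x)

lemma phiAux_le (n x : ℕ) : phiAux n x ≤ x := by
  unfold phiAux; split
  · exact le_refl _
  · exact min_le_left _ _

lemma sum_image_le' (s : Finset ℕ) (g : ℕ → ℕ) :
    ∑ y ∈ s.image g, y ≤ ∑ x ∈ s, g x := by
  induction s using Finset.induction with
  | empty => simp
  | @insert a s ha ih =>
    rw [Finset.image_insert, Finset.sum_insert ha]
    by_cases hg : g a ∈ s.image g
    · rw [Finset.insert_eq_self.mpr hg]
      exact le_trans ih (Nat.le_add_left _ _)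
    · rw [Finset.sum_insert hg]
      exact Nat.add_le_add_left ih _

lemma gauss_icc (m : ℕ) : (∑ x ∈ Finset.Icc 1 m, x) * 2 = m * (m + 1) := by
  induction m with
  | zero => simp
  | succ k ih =>
    rw [Finset.sum_Icc_succ_top (by omega), add_mul, ih]
    ring

theorem max_2n_sub_2 (n d : ℕ) (hn : 11 ≤ n) (hd1 : 1 ≤ d) (hd2 : d ≤ n - 1)
    (S : Finset ℕ) (h : MaximalUnrefinable (T n - d) S)
    (hsup : S.sup id = 2 * n - 2) :
    d = 1 ∧ S = insert (2 * n - 2) (Finset.Icc 1 (n - 2)) := by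
  obtain ⟨⟨⟨hpos, hcard, hsum⟩, hunref⟩, _hmax⟩ := h
  -- basic facts
  have hTn : T n * 2 = n * (n + 1) := by
    have : 2 ∣ n * (n + 1) := n.even_mul_succ_self.two_dvd
    unfold T
    exact Nat.div_mul_cancel this
  have hTlarge : n ≤ T n := by nlinarith
  have hne : S.Nonempty := Finset.card_pos.mp (by omega)
  obtain ⟨b, hbS, hb⟩ := Finset.exists_mem_eq_sup S hne id
  rw [hsup] at hb
  have hmem : 2 * n - 2 ∈ S := by rwa [show b = 2 * n - 2 from hb.symm] at hbS
  have hub : ∀ x ∈ S, x ≤ 2 * n - 2 := by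
    intro x hx
    have := Finset.le_sup (f := id) hx
    rwa [hsup] at this
  -- Step C : for each 1 ≤ k ≤ n-2, k ∈ S or 2n-2-k ∈ S
  have hC : ∀ k, 1 ≤ k → k ≤ n - 2 → (k ∈ S ∨ 2 * n - 2 - k ∈ S) := by
    intro k hk1 hk2
    by_contra hcon
    push_neg at hcon
    have h1 : k ∈ Missing S := by
      rw [Missing, hsup, Finset.mem_sdiff, Finset.mem_Icc]
      exact ⟨⟨hk1, by omega⟩, hcon.1⟩
    have h2 : 2 * n - 2 - k ∈ Missing S := by
      rw [Missing, hsup, Finset.mem_sdiff, Finset.mem_Icc]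
      exact ⟨⟨by omega, by omega⟩, hcon.2⟩
    have hne' : k ≠ 2 * n - 2 - k := by omega
    have := hunref _ h1 _ h2 hne'
    rw [show k + (2 * n - 2 - k) = 2 * n - 2 by omega] at this
    exact this hmem
  -- target set
  set t : Finset ℕ := insert (2 * n - 2) (Finset.Icc 1 (n - 2)) with ht
  have hnotmem : 2 * n - 2 ∉ Finset.Icc 1 (n - 2) := by
    rw [Finset.mem_Icc]; omega
  have hrel : n * (n + 1) + 2 = (n - 2) * (n - 2 + 1) + 4 * n := by
    obtain ⟨k, rfl⟩ : ∃ k, n = k + 2 := ⟨n - 2, by omega⟩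
    simp only [Nat.add_sub_cancel]
    ring
  have hsumt : ∑ x ∈ t, x = T n - 1 := by
    rw [ht, Finset.sum_insert hnotmem]
    have h2 := gauss_icc (n - 2)
    omega
  -- target ⊆ image of phi
  have himg : t ⊆ S.image (phiAux n) := by
    intro y hy
    rw [ht, Finset.mem_insert] at hy
    rcases hy with rfl | hy
    · exact Finset.mem_image.mpr ⟨2 * n - 2, hmem, by unfold phiAux; simp⟩
    · rw [Finset.mem_Icc] at hy
      rcases hC y hy.1 hy.2 with hyS | hyS
      · refine Finset.mem_image.mpr ⟨y, hyS, ?_⟩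
        unfold phiAux
        rw [if_neg (by omega)]
        omega
      · refine Finset.mem_image.mpr ⟨2 * n - 2 - y, hyS, ?_⟩
        unfold phiAux
        rw [if_neg (by omega)]
        omega
  -- sum chain
  have s1 : ∑ y ∈ t, y ≤ ∑ y ∈ S.image (phiAux n), y :=
    Finset.sum_le_sum_of_subset himg
  have s2 : ∑ y ∈ S.image (phiAux n), y ≤ ∑ x ∈ S, phiAux n x :=
    sum_image_le' S (phiAux n)
  have s3 : ∑ x ∈ S, phiAux n x ≤ ∑ x ∈ S, x :=
    Finset.sum_le_sum fun x _ => phiAux_le n x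
  have hsum' : ∑ x ∈ S, x = T n - d := hsum
  have hd : d = 1 := by omega
  subst hd
  refine ⟨rfl, ?_⟩
  -- equality of the pointwise sums
  have heq : ∑ x ∈ S, phiAux n x = ∑ x ∈ S, x := by omega
  have hfix : ∀ x ∈ S, phiAux n x = x :=
    fun x hx => (Finset.sum_eq_sum_iff_of_le fun i _ => phiAux_le n i).mp heq x hx
  have hbound : ∀ x ∈ S, x ≤ n - 1 ∨ x = 2 * n - 2 := by
    intro x hx
    have hfx := hfix x hx
    unfold phiAux at hfx
    by_cases hx2 : x = 2 * n - 2
    · right; exact hx2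
    · left
      rw [if_neg hx2] at hfx
      have hxu := hub x hx
      omega
  have hts : t ⊆ S := by
    intro y hy
    rw [ht, Finset.mem_insert] at hy
    rcases hy with rfl | hy
    · exact hmem
    · rw [Finset.mem_Icc] at hy
      rcases hC y hy.1 hy.2 with hyS | hyS
      · exact hyS
      · rcases hbound _ hyS with h1 | h1 <;> omega
  -- S = t
  have hsd : ∑ x ∈ S \ t, x + ∑ x ∈ t, x = ∑ x ∈ S, x :=
    Finset.sum_sdiff hts
  have hzero : ∑ x ∈ S \ t, x = 0 := by omega
  have hempty : S \ t = ∅ := by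
    rw [Finset.eq_empty_iff_forall_notMem]
    intro x hx
    have hx0 : x = 0 := by
      have := Finset.sum_eq_zero_iff.mp hzero x hx
      exact this
    have := hpos x (Finset.mem_sdiff.mp hx).1
    omega
  exact Finset.Subset.antisymm (Finset.sdiff_eq_empty_iff_subset.mp hempty) hts
end

section
/- For n ≥ 11, the partition (1, 2, ..., n−6, n−4, n−3, n+1, 2n−4) is an unrefinable partition of T_n − (n−5) with largest part 2n−4. -/
lemma sum_Icc_one_mul_two (k : ℕ) : (∑ x ∈ Finset.Icc 1 k, x) * 2 = k * (k + 1) := by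
  induction k with
  | zero => simp
  | succ k ih =>
    rw [Finset.sum_Icc_succ_top (by omega)]
    ring_nf
    ring_nf at ih
    omega

theorem unrefinable_n_sub_5 (n : ℕ) (hn : 11 ≤ n) :
    UnrefinablePartition (T n - (n - 5))
      (insert (2 * n - 4) (insert (n + 1) (insert (n - 3) (insert (n - 4)
        (Finset.Icc 1 (n - 6)))))) ∧
    (insert (2 * n - 4) (insert (n + 1) (insert (n - 3) (insert (n - 4)
        (Finset.Icc 1 (n - 6)))))).sup id = 2 * n - 4 := by
  obtain ⟨m, rfl⟩ : ∃ m, n = m + 11 := ⟨n - 11, by omega⟩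
  have h1 : 2 * (m + 11) - 4 = 2 * m + 18 := by omega
  have h2 : m + 11 - 3 = m + 8 := by omega
  have h3 : m + 11 - 4 = m + 7 := by omega
  have h4 : m + 11 - 6 = m + 5 := by omega
  rw [h1, h2, h3, h4]
  set S : Finset ℕ := insert (2 * m + 18) (insert (m + 11 + 1) (insert (m + 8)
      (insert (m + 7) (Finset.Icc 1 (m + 5))))) with hS
  have hmem : ∀ x, x ∈ S ↔ x = 2 * m + 18 ∨ x = m + 12 ∨ x = m + 8 ∨ x = m + 7 ∨
      (1 ≤ x ∧ x ≤ m + 5) := by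
    intro x
    simp only [hS, Finset.mem_insert, Finset.mem_Icc]
    try omega
  have hsup : S.sup id = 2 * m + 18 := by
    apply le_antisymm
    · apply Finset.sup_le
      intro x hx
      rw [hmem] at hx
      simp only [id]
      omega
    · exact Finset.le_sup (f := id) ((hmem _).mpr (by omega))
  refine ⟨⟨⟨?_, ?_, ?_⟩, ?_⟩, hsup⟩
  · intro x hx
    rw [hmem] at hx
    omega
  · apply Finset.one_lt_card.mpr
    exact ⟨2 * m + 18, (hmem _).mpr (by omega), m + 12, (hmem _).mpr (by omega), by omega⟩
  · have e1 : (2 * m + 18) ∉ (insert (m + 11 + 1) (insert (m + 8)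
        (insert (m + 7) (Finset.Icc 1 (m + 5))))) := by
      simp only [Finset.mem_insert, Finset.mem_Icc]; omega
    have e2 : (m + 11 + 1) ∉ (insert (m + 8) (insert (m + 7) (Finset.Icc 1 (m + 5)))) := by
      simp only [Finset.mem_insert, Finset.mem_Icc]; omega
    have e3 : (m + 8) ∉ (insert (m + 7) (Finset.Icc 1 (m + 5))) := by
      simp only [Finset.mem_insert, Finset.mem_Icc]; omega
    have e4 : (m + 7) ∉ Finset.Icc 1 (m + 5) := by
      simp only [Finset.mem_Icc]; omega
    rw [hS, Finset.sum_insert e1, Finset.sum_insert e2, Finset.sum_insert e3,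
      Finset.sum_insert e4]
    have hg : (∑ x ∈ Finset.Icc 1 (m + 5), id x) * 2 = (m + 5) * (m + 6) := by
      simpa using sum_Icc_one_mul_two (m + 5)
    have hT : (m + 11) * (m + 11 + 1) = (m + 5) * (m + 6) + 12 * m + 102 := by ring
    simp only [T, id_eq] at *
    omega
  · intro a ha b hb hab hsum
    rw [Missing, hsup, Finset.mem_sdiff, Finset.mem_Icc, hmem] at ha hb
    rw [hmem] at hsum
    omega
end

section
/- Let n ≥ 11 be odd. Then the number of maximal unrefinable partitions of T_n − 3 equals 1. -/
lemma T_succ (n : ℕ) : T (n + 1) = T n + (n + 1) := by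
  have h1 := two_T n
  have h2 : 2 * T (n + 1) = n * (n + 1) + 2 * (n + 1) := by rw [two_T]; ring
  omega
lemma T_mono_s10 {m n : ℕ} (h : m ≤ n) : T m ≤ T n :=
  Nat.div_le_div_right (Nat.mul_le_mul h (by omega))
lemma sum_Ioc (n : ℕ) : (Finset.Ioc 0 n).sum id = T n := by
  induction n with
  | zero => simp [T]
  | succ k ih =>
      rw [Finset.sum_Ioc_succ_top (Nat.zero_le _), ih]
      simp [T_succ]

section setup
variable {N : ℕ} {S : Finset ℕ}

lemma sup_mem (h : DistinctPartition N S) : S.sup id ∈ S := by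
  have hc := h.2.1
  have hne : S.Nonempty := Finset.card_pos.mp (by omega)
  obtain ⟨b, hb, he⟩ := S.exists_mem_eq_sup hne id
  rw [he]; exact hb

lemma subset_Icc (h : DistinctPartition N S) : S ⊆ Finset.Icc 1 (S.sup id) := by
  intro x hx
  exact Finset.mem_Icc.mpr ⟨h.1 x hx, Finset.le_sup (f := id) hx⟩

lemma mem_missing {x : ℕ} (h : DistinctPartition N S) :
    x ∈ Missing S ↔ 1 ≤ x ∧ x < S.sup id ∧ x ∉ S := by
  unfold Missing
  rw [Finset.mem_sdiff, Finset.mem_Icc]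
  constructor
  · rintro ⟨⟨h1, h2⟩, h3⟩
    refine ⟨h1, ?_, h3⟩
    rcases eq_or_lt_of_le h2 with rfl | hlt
    · exact absurd (sup_mem h) h3
    · exact hlt
  · rintro ⟨h1, h2, h3⟩; exact ⟨⟨h1, le_of_lt h2⟩, h3⟩

lemma sum_split (h : DistinctPartition N S) :
    (Missing S).sum id + N = T (S.sup id) := by
  rw [← h.2.2, Missing, Finset.sum_sdiff (subset_Icc h), ← sum_Ioc]
  congr 1

lemma f_inj (h : UnrefinablePartition N S) :
    ∀ x ∈ Missing S, ∀ y ∈ Missing S,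
      max x (S.sup id - x) = max y (S.sup id - y) → x = y := by
  intro x hx y hy hfe
  obtain ⟨hx1, hx2, hx3⟩ := (mem_missing h.1).mp hx
  obtain ⟨hy1, hy2, hy3⟩ := (mem_missing h.1).mp hy
  by_contra hne
  have hsum : x + y ∉ S := h.2 x hx y hy hne
  have hl : S.sup id ∈ S := sup_mem h.1
  rcases max_cases x (S.sup id - x) with ⟨e1, c1⟩ | ⟨e1, c1⟩ <;>
    rcases max_cases y (S.sup id - y) with ⟨e2, c2⟩ | ⟨e2, c2⟩ <;>
      rw [e1, e2] at hfe
  · omega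
  · exact hsum (by rw [show x + y = S.sup id from by omega]; exact hl)
  · exact hsum (by rw [show x + y = S.sup id from by omega]; exact hl)
  · omega

lemma missing_bound (h : UnrefinablePartition N S) :
    (Missing S).sum id + T ((S.sup id - 1) / 2) ≤ T (S.sup id - 1) := by
  set l := S.sup id with hldef
  set M := Missing S with hMdef
  have hMx : ∀ x ∈ M, 1 ≤ x ∧ x < l := fun x hx => by
    have := (mem_missing h.1).mp hx; exact ⟨this.1, this.2.1⟩
  have h1 : M.sum id ≤ M.sum (fun x => max x (l - x)) :=
    Finset.sum_le_sum fun x _ => le_max_left _ _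
  have h2 : (M.image (fun x => max x (l - x))).sum id
      = M.sum (fun x => max x (l - x)) := Finset.sum_image (f_inj h)
  have h3 : M.image (fun x => max x (l - x)) ⊆ Finset.Icc ((l - 1) / 2 + 1) (l - 1) := by
    intro y hy
    obtain ⟨x, hx, rfl⟩ := Finset.mem_image.mp hy
    obtain ⟨ha, hb⟩ := hMx x hx
    show max x (l - x) ∈ _
    rw [Finset.mem_Icc]
    rcases max_cases x (l - x) with ⟨e1, e2⟩ | ⟨e1, e2⟩ <;> rw [e1] <;> omega
  have h4 : (M.image (fun x => max x (l - x))).sum id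
      ≤ (Finset.Icc ((l - 1) / 2 + 1) (l - 1)).sum id :=
    Finset.sum_le_sum_of_subset h3
  have h5 : T ((l - 1) / 2) + (Finset.Icc ((l - 1) / 2 + 1) (l - 1)).sum id = T (l - 1) := by
    rw [Finset.Icc_add_one_left_eq_Ioc, ← sum_Ioc, ← sum_Ioc]
    exact Finset.sum_Ioc_consecutive id (Nat.zero_le _) (by omega)
  omega

lemma sup_bound (h : UnrefinablePartition N S) :
    S.sup id + T ((S.sup id - 1) / 2) ≤ N := by
  have h1 := sum_split h.1
  have h2 := missing_bound h
  have hl : 1 ≤ S.sup id := h.1.1 _ (sup_mem h.1)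
  have h3 : T (S.sup id) = T (S.sup id - 1) + S.sup id := by
    have h4 := T_succ (S.sup id - 1)
    have he : S.sup id - 1 + 1 = S.sup id := by omega
    rw [he] at h4; omega
  omega

end setup

lemma sup_le_bound {n : ℕ} {S : Finset ℕ} (hn : 11 ≤ n)
    (h : UnrefinablePartition (T n - 3) S) : S.sup id ≤ 2 * n - 4 := by
  obtain ⟨k, rfl⟩ : ∃ k, n = k + 11 := ⟨n - 11, by omega⟩
  by_contra hc
  push_neg at hc
  have hkey := sup_bound h
  have hmono : T (k + 9) ≤ T ((S.sup id - 1) / 2) := T_mono_s10 (by omega)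
  have h1 := two_T (k + 11)
  have h2 := two_T (k + 9)
  have hr : (k + 11) * (k + 11 + 1) = (k + 9) * (k + 9 + 1) + 4 * k + 42 := by ring
  omega

lemma S0_sup {n : ℕ} (hn : 11 ≤ n) :
    (Finset.Icc 1 (n - 2) ∪ {2 * n - 4}).sup id = 2 * n - 4 := by
  apply le_antisymm
  · apply Finset.sup_le
    intro x hx
    rcases Finset.mem_union.mp hx with hx | hx
    · have := Finset.mem_Icc.mp hx; simp only [id]; omega
    · have := Finset.mem_singleton.mp hx; simp only [id]; omega
  · exact Finset.le_sup (f := id) (Finset.mem_union_right _ (Finset.mem_singleton_self _))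

lemma S0_unref {n : ℕ} (hn : 11 ≤ n) :
    UnrefinablePartition (T n - 3) (Finset.Icc 1 (n - 2) ∪ {2 * n - 4}) := by
  have hdisj : Disjoint (Finset.Icc 1 (n - 2)) ({2 * n - 4} : Finset ℕ) := by
    simp only [Finset.disjoint_singleton_right, Finset.mem_Icc]
    omega
  refine ⟨⟨?_, ?_, ?_⟩, ?_⟩
  · intro x hx
    rcases Finset.mem_union.mp hx with hx | hx
    · have := Finset.mem_Icc.mp hx; omega
    · have := Finset.mem_singleton.mp hx; omega
  · refine Finset.one_lt_card.mpr ⟨1, ?_, 2 * n - 4, ?_, by omega⟩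
    · exact Finset.mem_union_left _ (Finset.mem_Icc.mpr ⟨le_refl _, by omega⟩)
    · exact Finset.mem_union_right _ (Finset.mem_singleton_self _)
  · rw [Finset.sum_union hdisj]
    have hIcc : (Finset.Icc 1 (n - 2)).sum id = T (n - 2) := by
      rw [← sum_Ioc]; congr 1
    rw [hIcc]
    obtain ⟨k, rfl⟩ : ∃ k, n = k + 11 := ⟨n - 11, by omega⟩
    have h1 := two_T (k + 11)
    have h2 : T (k + 11 - 2) = T (k + 9) := by congr 1
    have h3 := two_T (k + 9)
    have hr : (k + 11) * (k + 11 + 1) = (k + 9) * (k + 9 + 1) + 4 * k + 42 := by ring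
    simp only [Finset.sum_singleton, id]
    omega
  · intro a ha b hb hne hmem
    rw [Missing, S0_sup hn] at ha hb
    have ha' := Finset.mem_sdiff.mp ha
    have hb' := Finset.mem_sdiff.mp hb
    have ha1 := Finset.mem_Icc.mp ha'.1
    have hb1 := Finset.mem_Icc.mp hb'.1
    have ha2 : a ∉ Finset.Icc 1 (n - 2) ∧ a ≠ 2 * n - 4 := by
      constructor
      · intro hc; exact ha'.2 (Finset.mem_union_left _ hc)
      · intro hc; exact ha'.2 (Finset.mem_union_right _ (Finset.mem_singleton.mpr hc))
    have hb2 : b ∉ Finset.Icc 1 (n - 2) ∧ b ≠ 2 * n - 4 := by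
      constructor
      · intro hc; exact hb'.2 (Finset.mem_union_left _ hc)
      · intro hc; exact hb'.2 (Finset.mem_union_right _ (Finset.mem_singleton.mpr hc))
    rw [Finset.mem_Icc] at ha2 hb2
    push_neg at ha2 hb2
    rcases Finset.mem_union.mp hmem with hm | hm
    · have := Finset.mem_Icc.mp hm; omega
    · have := Finset.mem_singleton.mp hm; omega

lemma unique_max {n : ℕ} {S : Finset ℕ} (hn : 11 ≤ n) (hodd : Odd n)
    (h : UnrefinablePartition (T n - 3) S) (hsup : S.sup id = 2 * n - 4) :
    S = Finset.Icc 1 (n - 2) ∪ {2 * n - 4} := by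
  obtain ⟨m, rfl⟩ : ∃ m, n = m + 2 := ⟨n - 2, by omega⟩
  obtain ⟨j, hj⟩ := hodd
  have hm9 : 9 ≤ m := by omega
  have hsup' : S.sup id = 2 * m := by omega
  -- arithmetic facts
  have e1 := two_T (m + 2)
  have e2 := two_T m
  have ering : (m + 2) * (m + 2 + 1) = m * (m + 1) + 4 * m + 6 := by ring
  have hsplit := sum_split h.1
  rw [hsup'] at hsplit
  have e3 : T (2 * m) = T (2 * m - 1) + 2 * m := by
    have := T_succ (2 * m - 1)
    rw [show 2 * m - 1 + 1 = 2 * m from by omega] at this; omega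
  have e4 : T m = T (m - 1) + m := by
    have := T_succ (m - 1)
    rw [show m - 1 + 1 = m from by omega] at this; omega
  have hMsum : (Missing S).sum id + T m = T (2 * m - 1) := by omega
  -- injectivity of pairing map on missing parts
  have hinj := f_inj h
  simp only [hsup'] at hinj
  have hMx : ∀ x ∈ Missing S, 1 ≤ x ∧ x < 2 * m := by
    intro x hx
    have := (mem_missing h.1).mp hx
    rw [hsup'] at this
    exact ⟨this.1, this.2.1⟩
  have h1 : (Missing S).sum id ≤ (Missing S).sum (fun x => max x (2 * m - x)) :=
    Finset.sum_le_sum fun x _ => le_max_left _ _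
  have h2 : ((Missing S).image (fun x => max x (2 * m - x))).sum id
      = (Missing S).sum (fun x => max x (2 * m - x)) := Finset.sum_image hinj
  have h3 : (Missing S).image (fun x => max x (2 * m - x)) ⊆ Finset.Icc m (2 * m - 1) := by
    intro y hy
    obtain ⟨x, hx, rfl⟩ := Finset.mem_image.mp hy
    obtain ⟨ha, hb⟩ := hMx x hx
    show max x (2 * m - x) ∈ _
    rw [Finset.mem_Icc]
    rcases max_cases x (2 * m - x) with ⟨e, c⟩ | ⟨e, c⟩ <;> rw [e] <;> omega
  set R := Finset.Icc m (2 * m - 1) \ (Missing S).image (fun x => max x (2 * m - x)) with hR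
  have h4 : R.sum id + ((Missing S).image (fun x => max x (2 * m - x))).sum id
      = (Finset.Icc m (2 * m - 1)).sum id := Finset.sum_sdiff h3
  have h5 : T (m - 1) + (Finset.Icc m (2 * m - 1)).sum id = T (2 * m - 1) := by
    rw [show Finset.Icc m (2 * m - 1) = Finset.Ioc (m - 1) (2 * m - 1) from by
      rw [← Finset.Icc_add_one_left_eq_Ioc]; congr 1; omega]
    rw [← sum_Ioc, ← sum_Ioc]
    exact Finset.sum_Ioc_consecutive id (Nat.zero_le _) (by omega)
  -- parity
  have hpar : 2 ∣ ((Missing S).sum (fun x => max x (2 * m - x)) + (Missing S).sum id) := by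
    rw [← Finset.sum_add_distrib]
    apply Finset.dvd_sum
    intro x hx
    have := hMx x hx
    simp only [id]
    rcases max_cases x (2 * m - x) with ⟨e, c⟩ | ⟨e, c⟩ <;> rw [e] <;> omega
  obtain ⟨dd, hdd⟩ := hpar
  -- R is nonempty
  have hRne : R.Nonempty := by
    have hRs : R.sum id ≠ 0 := by omega
    exact Finset.nonempty_of_sum_ne_zero hRs
  obtain ⟨r, hr⟩ := hRne
  have hrm : m ≤ r := (Finset.mem_Icc.mp (Finset.mem_sdiff.mp hr).1).1
  have hrle : r ≤ R.sum id := Finset.single_le_sum (f := id) (fun i _ => Nat.zero_le _) hr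
  have hReq : R.sum id = m := by omega
  have himgeq : ((Missing S).image (fun x => max x (2 * m - x))).sum id = (Missing S).sum id := by omega
  -- the pairing map is the identity on M
  have hfid : ∀ x ∈ Missing S, max x (2 * m - x) = x := by
    by_contra hc
    push_neg at hc
    obtain ⟨x, hx, hxne⟩ := hc
    have hlt : (Missing S).sum id < (Missing S).sum (fun x => max x (2 * m - x)) :=
      Finset.sum_lt_sum (fun i _ => le_max_left _ _)
        ⟨x, hx, lt_of_le_of_ne (le_max_left _ _) (Ne.symm hxne)⟩
    omega
  have hMimg : (Missing S).image (fun x => max x (2 * m - x)) = Missing S := by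
    rw [Finset.image_congr (g := id) (fun x hx => hfid x hx), Finset.image_id]
  -- R = {m}
  have hRall : ∀ x ∈ R, x = m := by
    intro x hx
    have h6 : x ≤ R.sum id := Finset.single_le_sum (f := id) (fun i _ => Nat.zero_le _) hx
    have h7 : m ≤ x := (Finset.mem_Icc.mp (Finset.mem_sdiff.mp hx).1).1
    omega
  have hRm : R = {m} := by
    apply Finset.Subset.antisymm
    · intro x hx; exact Finset.mem_singleton.mpr (hRall x hx)
    · intro x hx
      rw [Finset.mem_singleton.mp hx, ← hRall r hr]
      exact hr
  -- determine M
  have hMsub : Missing S ⊆ Finset.Icc m (2 * m - 1) := hMimg ▸ h3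
  have hMeq : Missing S = Finset.Icc m (2 * m - 1) \ R := by
    rw [hR, hMimg, Finset.sdiff_sdiff_eq_self hMsub]
  have hMfin : Missing S = Finset.Icc (m + 1) (2 * m - 1) := by
    rw [hMeq, hRm]
    ext x
    simp only [Finset.mem_sdiff, Finset.mem_Icc, Finset.mem_singleton]
    omega
  -- recover S
  have hSrec : Finset.Icc 1 (S.sup id) \ Missing S = S :=
    Finset.sdiff_sdiff_eq_self (subset_Icc h.1)
  rw [← hSrec, hsup', hMfin]
  ext x
  simp only [Finset.mem_sdiff, Finset.mem_Icc, Finset.mem_union, Finset.mem_singleton]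
  omega

theorem count_d_eq_three_odd (n : ℕ) (hn : 11 ≤ n) (hodd : Odd n) :
    {S : Finset ℕ | MaximalUnrefinable (T n - 3) S}.ncard = 1 := by
  have hset : {S : Finset ℕ | MaximalUnrefinable (T n - 3) S}
      = {Finset.Icc 1 (n - 2) ∪ {2 * n - 4}} := by
    ext S
    simp only [Set.mem_setOf_eq, Set.mem_singleton_iff]
    constructor
    · rintro ⟨hU, hmax⟩
      have hle : S.sup id ≤ 2 * n - 4 := sup_le_bound hn hU
      have hge : 2 * n - 4 ≤ S.sup id := by
        have := hmax _ (S0_unref hn)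
        rwa [S0_sup hn] at this
      exact unique_max hn hodd hU (le_antisymm hle hge)
    · rintro rfl
      refine ⟨S0_unref hn, fun S' hS' => ?_⟩
      rw [S0_sup hn]
      exact sup_le_bound hn hS'
  rw [hset]
  exact Set.ncard_singleton _
end

section
/- For every positive integer k and nonnegative integer i, the map sending a partition (λ₁ < λ₂ < ... < λ_{2+2i}) to (2λ₁−1, 2λ₂−1, ..., 2λ_{2+2i}−1) is a bijection between partitions of k+2+i into exactly 2+2i distinct parts and partitions of 2(k+1) into exactly 2+2i distinct odd parts. -/
theorem psi_bijective (k i : ℕ) (hk : 1 ≤ k) :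
    Set.BijOn (fun S : Finset ℕ => S.image (fun x => 2 * x - 1))
      {S : Finset ℕ | DistinctPartition (k + 2 + i) S ∧ S.card = 2 + 2 * i}
      {S : Finset ℕ | DistinctPartition (2 * (k + 1)) S ∧ S.card = 2 + 2 * i ∧
        ∀ x ∈ S, Odd x} := by
  have finj : Function.Injective (fun x : ℕ => 2 * x - 1) := by
    intro a b h; simp only [] at h; omega
  refine ⟨?_, ?_, ?_⟩
  · rintro S ⟨⟨hpos, hcard2, hsum⟩, hcard⟩
    simp only [id] at hsum
    refine ⟨⟨?_, ?_, ?_⟩, ?_, ?_⟩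
    · intro x hx
      obtain ⟨y, hy, rfl⟩ := Finset.mem_image.mp hx
      have := hpos y hy; omega
    · rw [Finset.card_image_of_injective _ finj]; omega
    · rw [Finset.sum_image (fun a _ b _ h => finj h)]
      simp only [id]
      have h1 : ∑ x ∈ S, ((2 * x - 1) + 1) = ∑ x ∈ S, 2 * x :=
        Finset.sum_congr rfl (fun x hx => by have := hpos x hx; omega)
      rw [Finset.sum_add_distrib, Finset.sum_const, smul_eq_mul, mul_one,
        ← Finset.mul_sum] at h1
      omega
    · rw [Finset.card_image_of_injective _ finj]; exact hcard
    · intro x hx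
      obtain ⟨y, hy, rfl⟩ := Finset.mem_image.mp hx
      have := hpos y hy
      exact ⟨y - 1, by omega⟩
  · intro a _ b _ h
    exact Finset.image_injective finj h
  · rintro T ⟨⟨hpos, hcard2, hsum⟩, hcard, hodd⟩
    simp only [id] at hsum
    set g : ℕ → ℕ := fun x => (x + 1) / 2 with hg
    have ginj : Set.InjOn g T := by
      intro a ha b hb h
      obtain ⟨m, hm⟩ := hodd a ha
      obtain ⟨n, hn⟩ := hodd b hb
      simp only [hg] at h; omega
    refine ⟨T.image g, ⟨⟨?_, ?_, ?_⟩, ?_⟩, ?_⟩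
    · intro x hx
      obtain ⟨y, hy, rfl⟩ := Finset.mem_image.mp hx
      obtain ⟨m, hm⟩ := hodd y hy
      simp only [hg]; omega
    · rw [Finset.card_image_of_injOn ginj]; omega
    · rw [Finset.sum_image (fun a ha b hb h => ginj ha hb h)]
      simp only [id]
      have h1 : 2 * ∑ x ∈ T, g x = ∑ x ∈ T, (x + 1) := by
        rw [Finset.mul_sum]
        exact Finset.sum_congr rfl (fun x hx => by
          obtain ⟨m, hm⟩ := hodd x hx; simp only [hg]; omega)
      rw [Finset.sum_add_distrib, Finset.sum_const, smul_eq_mul, mul_one] at h1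
      omega
    · rw [Finset.card_image_of_injOn ginj]; exact hcard
    · show (T.image g).image (fun x => 2 * x - 1) = T
      rw [Finset.image_image]
      have : T.image ((fun x => 2 * x - 1) ∘ g) = T.image id :=
        Finset.image_congr (fun x hx => by
          obtain ⟨m, hm⟩ := hodd x hx
          simp only [Function.comp, hg, id]; omega)
      simpa using this
end

section
/- For every positive integer m, the number of partitions of 2m into distinct odd parts equals the sum over i ≥ 0 of the number of partitions of m + 1 + i into exactly 2 + 2i distinct parts. -/
/-! The map `x ↦ 2x - 1` turns a partition of `N` into `k` distinct parts into a partition of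
`2N - k` into `k` distinct odd parts, and `y ↦ (y + 1) / 2` undoes it. A partition of `2m` into
distinct odd parts has an even number `k = 2 + 2i` of parts, so sorting these partitions by their
number of parts matches them with the partitions of `m + 1 + i` into `2 + 2i` distinct parts. -/

open Finset

theorem Set.Finite.ncard_eq_tsum_ncard_fiber {α β : Type*} {s : Set α} (hs : s.Finite)
    (f : α → β) : s.ncard = ∑' b, {a ∈ s | f a = b}.ncard := by
  classical
  rw [tsum_eq_sum (s := hs.toFinset.image f), Set.ncard_eq_toFinset_card s hs,
    card_eq_sum_card_image f]
  · refine sum_congr rfl fun b _ => ?_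
    rw [← Set.ncard_coe_finset]
    congr 1
    ext a
    simp
  · intro b hb
    refine Set.ncard_eq_zero (hs.subset (Set.sep_subset _ _)) |>.2 ?_
    ext a
    simp only [Finset.mem_image, Set.Finite.mem_toFinset, not_exists, not_and] at hb
    simpa using hb a

theorem finite_setOf_sum_id_eq (N : ℕ) : {S : Finset ℕ | S.sum id = N}.Finite := by
  refine (range (N + 1)).powerset.finite_toSet.subset fun S hS =>
    mem_coe.2 (mem_powerset.2 fun x hx => ?_)
  have := single_le_sum (f := id) (fun _ _ => Nat.zero_le _) hx
  simp only [Set.mem_ofPred_eq, id, mem_range] at this hS ⊢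
  omega

theorem even_card_of_forall_odd {S : Finset ℕ} (hodd : ∀ x ∈ S, Odd x)
    (hsum : Even (S.sum id)) : Even S.card := by
  rwa [even_sum_iff_even_card_odd, filter_true_of_mem (p := fun x => Odd (id x)) hodd] at hsum

/-- Injective on all of `ℕ` despite the truncated subtraction, which only affects `0 ↦ 0`. -/
def oddEmbedding : ℕ ↪ ℕ := ⟨fun x => 2 * x - 1, fun a b h => by simp only at h; omega⟩

@[simp]
theorem oddEmbedding_apply (x : ℕ) : oddEmbedding x = 2 * x - 1 := rfl

theorem sum_map_oddEmbedding_add_card {S : Finset ℕ} (hpos : ∀ x ∈ S, 0 < x) :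
    (S.map oddEmbedding).sum id + S.card = 2 * S.sum id := by
  rw [sum_map, card_eq_sum_ones, ← sum_add_distrib, mul_sum]
  refine sum_congr rfl fun x hx => ?_
  have := hpos x hx
  simp only [oddEmbedding_apply, id]
  omega

theorem map_oddEmbedding_image_half {T : Finset ℕ} (hodd : ∀ y ∈ T, Odd y) :
    (T.image fun y => (y + 1) / 2).map oddEmbedding = T := by
  rw [map_eq_image, image_image]
  refine (image_congr fun y hy => ?_).trans (image_id)
  obtain ⟨a, rfl⟩ := hodd y hy
  simp only [oddEmbedding_apply, Function.comp, id]
  omega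

theorem image_map_oddEmbedding_distinctPartition {M N k : ℕ} (h : M + k = 2 * N) :
    Finset.map oddEmbedding '' {S | DistinctPartition N S ∧ S.card = k} =
      {T | DistinctPartition M T ∧ (∀ y ∈ T, Odd y) ∧ T.card = k} := by
  ext T
  constructor
  · rintro ⟨S, ⟨⟨hpos, hcard2, hsum⟩, hcard⟩, rfl⟩
    have hsum' := sum_map_oddEmbedding_add_card hpos
    have hodd : ∀ y ∈ S.map oddEmbedding, Odd y := by
      simp only [mem_map, forall_exists_index, and_imp]
      rintro _ x hx rfl
      exact ⟨x - 1, by have := hpos x hx; simp only [oddEmbedding_apply]; omega⟩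
    exact ⟨⟨fun y hy => (hodd y hy).pos, by rwa [card_map], by omega⟩, hodd,
      by rwa [card_map]⟩
  · rintro ⟨⟨-, hcard2, hsum⟩, hodd, hcard⟩
    set S := T.image fun y => (y + 1) / 2
    have hS : S.map oddEmbedding = T := map_oddEmbedding_image_half hodd
    have hpos : ∀ x ∈ S, 0 < x := by
      simp only [S, mem_image, forall_exists_index, and_imp]
      rintro _ y hy rfl
      have := (hodd y hy).pos
      omega
    have hsum' := sum_map_oddEmbedding_add_card hpos
    rw [← hS, card_map] at hcard hcard2
    rw [← hS] at hsum
    exact ⟨S, ⟨⟨hpos, hcard2, by omega⟩, hcard⟩, hS⟩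

theorem count_odd_parts_general (m : ℕ) :
    {S : Finset ℕ | DistinctPartition (2 * m) S ∧ ∀ x ∈ S, Odd x}.ncard =
      ∑' i : ℕ,
        {S : Finset ℕ | DistinctPartition (m + 1 + i) S ∧ S.card = 2 + 2 * i}.ncard := by
  set A := {S : Finset ℕ | DistinctPartition (2 * m) S ∧ ∀ x ∈ S, Odd x}
  have hA : A.Finite := (finite_setOf_sum_id_eq (2 * m)).subset fun S hS => hS.1.2.2
  have hinj : Function.Injective fun i : ℕ => 2 + 2 * i := fun i j h => by simp only at h; omega
  rw [hA.ncard_eq_tsum_ncard_fiber card, ← hinj.tsum_eq]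
  · refine tsum_congr fun i => (Eq.symm ?_)
    rw [← Set.ncard_image_of_injective _ (map_injective oddEmbedding),
      image_map_oddEmbedding_distinctPartition (M := 2 * m) (by ring)]
    simp only [A, Set.sep_ofPred, and_assoc]
  · intro k hk
    obtain ⟨S, ⟨hS, hodd⟩, rfl⟩ := Set.nonempty_of_ncard_ne_zero hk
    obtain ⟨j, hj⟩ := even_card_of_forall_odd hodd (hS.2.2 ▸ even_two_mul m)
    exact ⟨j - 1, by have := hS.2.1; simp only; omega⟩

theorem count_odd_parts (m : ℕ) (hm : 1 ≤ m) :
    {S : Finset ℕ | DistinctPartition (2 * m) S ∧ ∀ x ∈ S, Odd x}.ncard =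
      ∑' i : ℕ,
        {S : Finset ℕ | DistinctPartition (m + 1 + i) S ∧ S.card = 2 + 2 * i}.ncard :=
  count_odd_parts_general m
end

section
/- Let n ≥ 11. The partition (1, 2, ..., n−2, 2n−4) is an unrefinable partition of T_n − 3, and the partition (1, 2, ..., n−2, 2n−5) is an unrefinable partition of T_n − 4. -/
lemma icc_sum (m : ℕ) : (Finset.Icc 1 m).sum id * 2 = m * (m+1) := by
  induction m with
  | zero => simp
  | succ m ih =>
    rw [Finset.sum_Icc_succ_top (by omega), add_mul, ih]
    simp only [id]
    ring

lemma aux (n p : ℕ) (hn : 11 ≤ n) (hp1 : n - 2 < p) (hp2 : p ≤ 2 * n - 4) :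
    UnrefinablePartition ((insert p (Finset.Icc 1 (n-2))).sum id)
      (insert p (Finset.Icc 1 (n-2))) := by
  have hpmem : p ∉ Finset.Icc 1 (n-2) := by simp only [Finset.mem_Icc]; omega
  have hsup : (insert p (Finset.Icc 1 (n-2))).sup id = p := by
    rw [Finset.sup_insert]
    have h : (Finset.Icc 1 (n-2)).sup id ≤ p := by
      apply Finset.sup_le
      intro x hx
      simp only [Finset.mem_Icc] at hx
      simp only [id]
      omega
    simp only [id]
    exact sup_eq_left.mpr h
  refine ⟨⟨?_, ?_, rfl⟩, ?_⟩
  · intro x hx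
    rcases Finset.mem_insert.mp hx with rfl | hx
    · omega
    · exact (Finset.mem_Icc.mp hx).1
  · rw [Finset.card_insert_of_notMem hpmem, Nat.card_Icc]
    omega
  · intro a ha b hb hab
    unfold Missing at ha hb
    rw [hsup] at ha hb
    simp only [Finset.mem_sdiff, Finset.mem_Icc, Finset.mem_insert] at ha hb ⊢
    push_neg at ha hb
    omega


theorem unrefinable_special (n : ℕ) (hn : 11 ≤ n) :
    UnrefinablePartition (T n - 3) (insert (2 * n - 4) (Finset.Icc 1 (n - 2))) ∧
    UnrefinablePartition (T n - 4) (insert (2 * n - 5) (Finset.Icc 1 (n - 2))) := by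
  obtain ⟨k, rfl⟩ : ∃ k, n = k + 11 := ⟨n - 11, by omega⟩
  have e9 : k + 11 - 2 = k + 9 := by omega
  have hA := icc_sum (k + 9)
  have hT : 2 * T (k+11) = (k+11)*(k+12) :=
    Nat.mul_div_cancel' (Nat.even_mul_succ_self (k+11)).two_dvd
  have hq : (k+9)*(k+9+1) + (4*k+42) = (k+11)*(k+12) := by ring
  have key : (Finset.Icc 1 (k+9)).sum id * 2 + (4*k+42) = 2 * T (k+11) := by
    rw [hA, hT]; exact hq
  have hpm1 : (2*(k+11)-4) ∉ Finset.Icc 1 (k+9) := by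
    simp only [Finset.mem_Icc]; omega
  have hpm2 : (2*(k+11)-5) ∉ Finset.Icc 1 (k+9) := by
    simp only [Finset.mem_Icc]; omega
  constructor
  · have h := aux (k+11) (2*(k+11)-4) (by omega) (by omega) (by omega)
    rw [e9] at h ⊢
    rwa [Finset.sum_insert hpm1,
      show id (2*(k+11)-4) + (Finset.Icc 1 (k+9)).sum id = T (k+11) - 3 from by
        simp only [id] at key ⊢; omega] at h
  · have h := aux (k+11) (2*(k+11)-5) (by omega) (by omega) (by omega)
    rw [e9] at h ⊢
    rwa [Finset.sum_insert hpm2,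
      show id (2*(k+11)-5) + (Finset.Icc 1 (k+9)).sum id = T (k+11) - 4 from by
        simp only [id] at key ⊢; omega] at h
end
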